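/- Fix an integer N ≥ 3 and define T_M on triples of real numbers by T_M(α, β, γ) = ((β+γ)/2 + π(6−N)/(2N), (α+γ)/2 + π(N−6)/(4N), (α+β)/2 + π(N−6)/(4N)). If (α, β, γ) satisfies α + β + γ = π and α⁽ⁿ⁾ denotes the first component of T_Mⁿ(α, β, γ), then for every n ≥ 2, α⁽ⁿ⁾ = α⁽ⁿ⁻²⁾/4 + 3π/(2N); consequently for every n ≥ 0, α⁽²ⁿ⁾ = α/4ⁿ + (3π/(2N)) · Σ_{k=0}^{n−1} (1/4)ᵏ. -/
import Mathlib


open Real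

/-- The corrected triangle transformation for an `N`-simple mesh. -/
noncomputable def TM (N : ℕ) (p : ℝ × ℝ × ℝ) : ℝ × ℝ × ℝ :=
  ((p.2.1 + p.2.2) / 2 + π * (6 - (N : ℝ)) / (2 * N),
   (p.1 + p.2.2) / 2 + π * ((N : ℝ) - 6) / (4 * N),
   (p.1 + p.2.1) / 2 + π * ((N : ℝ) - 6) / (4 * N))

theorem TM_first_component_recurrence (N : ℕ) (hN : 3 ≤ N)
    (α β γ : ℝ) (hsum : α + β + γ = π) :
    (∀ n : ℕ, 2 ≤ n →
      ((TM N)^[n] (α, β, γ)).1 =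
        ((TM N)^[n - 2] (α, β, γ)).1 / 4 + 3 * π / (2 * N)) ∧
    (∀ n : ℕ,
      ((TM N)^[2 * n] (α, β, γ)).1 =
        α / 4 ^ n + (3 * π / (2 * N)) * ∑ k ∈ Finset.range n, (1 / 4 : ℝ) ^ k) := by
  have hNne : (N : ℝ) ≠ 0 := by
    have : 0 < N := by omega
    exact_mod_cast this.ne'
  -- sum invariant
  have hinv : ∀ n : ℕ, (((TM N)^[n] (α, β, γ)).1 + ((TM N)^[n] (α, β, γ)).2.1
      + ((TM N)^[n] (α, β, γ)).2.2) = π := by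
    intro n
    induction n with
    | zero => simpa using hsum
    | succ n ih =>
      rw [Function.iterate_succ_apply']
      set q := (TM N)^[n] (α, β, γ)
      simp only [TM]
      have hc : π * (6 - (N:ℝ)) / (2 * N) + 2 * (π * ((N:ℝ) - 6) / (4 * N)) = 0 := by
        field_simp; ring
      linarith [ih, hc]
  -- one-step recurrence for the first component
  have hstep : ∀ n : ℕ, ((TM N)^[n+1] (α, β, γ)).1 =
      (π - ((TM N)^[n] (α, β, γ)).1) / 2 + π * (6 - (N : ℝ)) / (2 * N) := by
    intro n
    rw [Function.iterate_succ_apply']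
    have h := hinv n
    set q := (TM N)^[n] (α, β, γ)
    simp only [TM]
    linarith [h]
  have key : ∀ n : ℕ, ((TM N)^[n+2] (α, β, γ)).1 =
      ((TM N)^[n] (α, β, γ)).1 / 4 + 3 * π / (2 * N) := by
    intro n
    have h1 := hstep (n + 1)
    have h2 := hstep n
    rw [h1, h2]
    field_simp
    ring
  constructor
  · intro n hn
    obtain ⟨m, rfl⟩ : ∃ m, n = m + 2 := ⟨n - 2, by omega⟩
    simpa using key m
  · intro n
    induction n with
    | zero => simp
    | succ n ih =>
      have : 2 * (n + 1) = 2 * n + 2 := by ring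
      have h14 : (1 / 4 : ℝ) ≠ 1 := by norm_num
      rw [this, key (2 * n), ih, geom_sum_eq h14, geom_sum_eq h14, pow_succ]
      field_simp
      ring
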